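/- Let Φ be a crystallographic root system. The semiclosed subsets of Φ (those R with both R⁺ = R ∩ Φ⁺ and R⁻ = R ∩ Φ⁻ closed) form a lattice under the weak order, with meet R ∧ S = cl(R⁺ ∪ S⁺) ⊔ (R⁻ ∩ S⁻) and join R ∨ S = (R⁺ ∩ S⁺) ⊔ cl(R⁻ ∪ S⁻), where cl(T) = ℕT ∩ Φ. -/

import Mathlib

/-!
The only substantial step is that the meet is the greatest lower bound: for semiclosed `T` below
`R` and `S`, the closure of `(R ∪ S)⁺ ⊆ T⁺` must stay in `T⁺`. A closed set `C` of roots lying in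
an open half-space `{g > 0}` already contains every root `γ = β₁ + ⋯ + βₖ` with all `βᵢ ∈ C`:
since `⟪γ, γ⟫ > 0`, some `βᵢ` has `⟪βᵢ, γ⟫ > 0`; then `γ ≠ -βᵢ` because `g γ ≥ 0`, so unless
`γ = βᵢ` the crystallographic condition makes `γ - βᵢ` a root, a shorter such sum, and
closedness of `C` adds `βᵢ` back. The join is the meet for the opposite positive system `-f`.
-/

open Pointwise

structure RootSys (V : Type*) [NormedAddCommGroup V] [InnerProductSpace ℝ V] where
  Φ : Set V
  finite : Φ.Finite
  nonzero : ∀ α ∈ Φ, α ≠ (0 : V)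
  line : ∀ α ∈ Φ, Φ ∩ {x : V | ∃ t : ℝ, x = t • α} = {α, -α}
  reflect : ∀ α ∈ Φ, ∀ β ∈ Φ, β - (2 * (inner ℝ α β : ℝ) / (inner ℝ α α : ℝ)) • α ∈ Φ

variable {V : Type*} [NormedAddCommGroup V] [InnerProductSpace ℝ V]

/-- `Φ` is crystallographic: `⟨α^∨, β⟩ ∈ ℤ` for all roots `α, β`. -/
def RootSys.IsCrystallographic (R : RootSys V) : Prop :=
  ∀ α ∈ R.Φ, ∀ β ∈ R.Φ, ∃ n : ℤ, 2 * (inner ℝ α β : ℝ) / (inner ℝ α α : ℝ) = (n : ℝ)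

/-- A subset `S ⊆ Φ` is closed if it is stable under sums of two elements staying in `Φ`. -/
def RootSys.IsClosedSubset (R : RootSys V) (S : Set V) : Prop :=
  ∀ α ∈ S, ∀ β ∈ S, α + β ∈ R.Φ → α + β ∈ S

/-- A set of roots is antisymmetric if it never contains both `α` and `-α`. -/
def IsAntisymSet (S : Set V) : Prop := ∀ α ∈ S, -α ∉ S

/-- A `Φ`-poset: an antisymmetric closed subset of `Φ`. -/
def RootSys.IsPoset (R : RootSys V) (S : Set V) : Prop :=
  S ⊆ R.Φ ∧ IsAntisymSet S ∧ R.IsClosedSubset S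

/-- Closure: roots that are nonnegative integer combinations (multiset sums) of elements of `T`. -/
def RootSys.clos (R : RootSys V) (T : Set V) : Set V :=
  {γ ∈ R.Φ | ∃ M : Multiset V, (∀ x ∈ M, x ∈ T) ∧ M.sum = γ}

/-- Nonnegative integer combinations (multiset sums) of elements of `T`. -/
def nncomb (T : Set V) : Set V :=
  {v | ∃ M : Multiset V, (∀ x ∈ M, x ∈ T) ∧ M.sum = v}

/-- A root system equipped with a generic linear functional determining positive roots. -/
structure PosRootSys (V : Type*) [NormedAddCommGroup V] [InnerProductSpace ℝ V]
    extends RootSys V where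
  f : V →ₗ[ℝ] ℝ
  generic : ∀ α ∈ Φ, f α ≠ 0

def PosRootSys.Pos (P : PosRootSys V) : Set V := {α ∈ P.Φ | 0 < P.f α}

def PosRootSys.Neg (P : PosRootSys V) : Set V := {α ∈ P.Φ | P.f α < 0}

/-- The weak order: `R ≼ S` iff `R⁺ ⊇ S⁺` and `R⁻ ⊆ S⁻`. -/
def PosRootSys.wle (P : PosRootSys V) (R S : Set V) : Prop :=
  S ∩ P.Pos ⊆ R ∩ P.Pos ∧ R ∩ P.Neg ⊆ S ∩ P.Neg

/-- `R` is semiclosed if both `R⁺` and `R⁻` are closed. -/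
def PosRootSys.SemiClosed (P : PosRootSys V) (S : Set V) : Prop :=
  S ⊆ P.Φ ∧ P.toRootSys.IsClosedSubset (S ∩ P.Pos) ∧
    P.toRootSys.IsClosedSubset (S ∩ P.Neg)

/-- Negative closure deletion. -/
def PosRootSys.ncd (P : PosRootSys V) (S : Set V) : Set V :=
  S \ {α | α ∈ S ∩ P.Neg ∧ ∃ X : Finset V, ↑X ⊆ S ∩ P.Pos ∧ α + X.sum id ∈ P.Φ \ S}

/-- Positive closure deletion. -/
def PosRootSys.pcd (P : PosRootSys V) (S : Set V) : Set V :=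
  S \ {α | α ∈ S ∩ P.Pos ∧ ∃ X : Finset V, ↑X ⊆ S ∩ P.Neg ∧ α + X.sum id ∈ P.Φ \ S}

/-- Meet formula on closed subsets. -/
def PosRootSys.wmeet (P : PosRootSys V) (R S : Set V) : Set V :=
  P.ncd (P.toRootSys.clos ((R ∪ S) ∩ P.Pos) ∪ ((R ∩ S) ∩ P.Neg))

/-- Join formula on closed subsets. -/
def PosRootSys.wjoin (P : PosRootSys V) (R S : Set V) : Set V :=
  P.pcd (((R ∩ S) ∩ P.Pos) ∪ P.toRootSys.clos ((R ∪ S) ∩ P.Neg))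

open scoped RealInnerProductSpace

theorem Multiset.exists_mem_inner_sum_pos {M : Multiset V} (hM : M.sum ≠ 0) :
    ∃ β ∈ M, 0 < ⟪β, M.sum⟫ := by
  by_contra! h
  have hself : ⟪M.sum, M.sum⟫ = (M.map fun β => ⟪β, M.sum⟫).sum :=
    map_multiset_sum ((innerₗ V).flip M.sum) M
  have hle := Multiset.sum_map_le_sum_map (fun β => ⟪β, M.sum⟫) (fun _ => 0) h
  rw [← hself, Multiset.map_const', Multiset.sum_replicate, smul_zero] at hle
  exact hM (real_inner_self_nonpos.mp hle)

namespace RootSys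

variable (R : RootSys V)

theorem neg_mem {α : V} (hα : α ∈ R.Φ) : -α ∈ R.Φ := by
  have h : -α ∈ ({α, -α} : Set V) := by simp
  rw [← R.line α hα] at h
  exact h.1

theorem eq_or_eq_neg_of_eq_smul {α β : V} (hα : α ∈ R.Φ) (hβ : β ∈ R.Φ) {t : ℝ}
    (ht : β = t • α) : β = α ∨ β = -α := by
  have h : β ∈ R.Φ ∩ {x : V | ∃ t : ℝ, x = t • α} := ⟨hβ, t, ht⟩
  rwa [R.line α hα] at h

/-- Two non-proportional roots with positive inner product have Cartan integers `m, n ≥ 1` with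
`m * n < 4` by strict Cauchy–Schwarz, so one of them is `1` and a reflection produces `β - α`. -/
theorem sub_mem_of_inner_pos (hcr : R.IsCrystallographic) {α β : V} (hα : α ∈ R.Φ)
    (hβ : β ∈ R.Φ) (hαβ : 0 < ⟪α, β⟫) (hβα : β ≠ α) (hβα' : β ≠ -α) : β - α ∈ R.Φ := by
  obtain ⟨m, hm⟩ := hcr α hα β hβ
  obtain ⟨n, hn⟩ := hcr β hβ α hα
  rw [real_inner_comm] at hn
  have hαα : 0 < ⟪α, α⟫ := real_inner_self_pos.mpr (R.nonzero α hα)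
  have hββ : 0 < ⟪β, β⟫ := real_inner_self_pos.mpr (R.nonzero β hβ)
  have hm1 : 1 ≤ m := by
    have : (0 : ℝ) < m := hm ▸ by positivity
    exact_mod_cast this
  have hn1 : 1 ≤ n := by
    have : (0 : ℝ) < n := hn ▸ by positivity
    exact_mod_cast this
  have hCS : ⟪α, β⟫ * ⟪α, β⟫ < ⟪α, α⟫ * ⟪β, β⟫ := by
    have hα0 : ‖α‖ ≠ 0 := norm_ne_zero_iff.mpr (R.nonzero α hα)
    have hlt : ⟪α, β⟫ < ‖α‖ * ‖β‖ := by
      refine inner_lt_norm_mul_iff_real.mpr fun h => ?_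
      have hβ_smul : β = (‖α‖⁻¹ * ‖β‖) • α := by
        rw [mul_smul, h, smul_smul, inv_mul_cancel₀ hα0, one_smul]
      exact (R.eq_or_eq_neg_of_eq_smul hα hβ hβ_smul).elim hβα hβα'
    rw [real_inner_self_eq_norm_mul_norm, real_inner_self_eq_norm_mul_norm]
    nlinarith [norm_nonneg α, norm_nonneg β]
  have hmn : m * n < 4 := by
    have : (m : ℝ) * n < 4 := by
      rw [← hm, ← hn, div_mul_div_comm, div_lt_iff₀ (by positivity)]
      nlinarith
    exact_mod_cast this
  have hm_or_hn : m = 1 ∨ n = 1 := by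
    by_contra! h
    nlinarith [h.1.lt_of_le' hm1, h.2.lt_of_le' hn1]
  rcases hm_or_hn with rfl | rfl
  · have hβα'' := R.reflect α hα β hβ
    rwa [hm, Int.cast_one, one_smul] at hβα''
  · have hαβ' := R.neg_mem (R.reflect β hβ α hα)
    rw [real_inner_comm, hn] at hαβ'
    simpa using hαβ'

theorem isClosedSubset_clos (T : Set V) : R.IsClosedSubset (R.clos T) := by
  rintro _ ⟨-, M₁, hM₁, rfl⟩ _ ⟨-, M₂, hM₂, rfl⟩ hsum
  refine ⟨hsum, M₁ + M₂, fun x hx => ?_, Multiset.sum_add M₁ M₂⟩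
  exact (Multiset.mem_add.mp hx).elim (hM₁ x) (hM₂ x)

theorem mem_clos_of_mem {T : Set V} {α : V} (hαT : α ∈ T) (hαΦ : α ∈ R.Φ) : α ∈ R.clos T :=
  ⟨hαΦ, {α}, by simpa using hαT, Multiset.sum_singleton α⟩

theorem clos_mono {S T : Set V} (h : S ⊆ T) : R.clos S ⊆ R.clos T :=
  fun _ ⟨hγ, M, hM, hsum⟩ => ⟨hγ, M, fun x hx => h (hM x hx), hsum⟩

theorem pos_of_mem_clos (g : V →ₗ[ℝ] ℝ) {T : Set V} (hT : ∀ x ∈ T, 0 < g x) {γ : V}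
    (hγT : γ ∈ R.clos T) : 0 < g γ := by
  obtain ⟨hγ, M, hM, rfl⟩ := hγT
  have hM0 : M ≠ 0 := by
    rintro rfl
    exact R.nonzero 0 hγ rfl
  have := Multiset.sum_lt_sum_of_nonempty (f := fun _ => (0 : ℝ)) hM0 fun x hx => hT x (hM x hx)
  simpa [map_multiset_sum] using this

theorem clos_subset_of_isClosedSubset (hcr : R.IsCrystallographic) (g : V →ₗ[ℝ] ℝ) {C : Set V}
    (hCΦ : C ⊆ R.Φ) (hC : R.IsClosedSubset C) (hg : ∀ x ∈ C, 0 < g x) : R.clos C ⊆ C := by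
  classical
  rintro _ ⟨hγ, M, hM, rfl⟩
  induction M using Multiset.strongInductionOn with
  | ih M ih =>
    obtain ⟨β, hβM, hβγ⟩ := Multiset.exists_mem_inner_sum_pos (R.nonzero _ hγ)
    by_cases hγβ : M.sum = β
    · exact hγβ ▸ hM β hβM
    have hγβ' : M.sum ≠ -β := by
      intro h
      have hsum : 0 ≤ g M.sum := by
        rw [map_multiset_sum]
        exact Multiset.sum_nonneg fun x hx => by
          obtain ⟨y, hy, rfl⟩ := Multiset.mem_map.mp hx
          exact (hg y (hM y hy)).le
      rw [h, map_neg] at hsum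
      linarith [hg β (hM β hβM)]
    have herase : (M.erase β).sum = M.sum - β := by
      rw [← Multiset.sum_erase hβM, add_sub_cancel_left]
    have hrest : (M.erase β).sum ∈ C := by
      refine ih _ (Multiset.erase_lt.mpr hβM) (fun x hx => hM x (Multiset.mem_of_mem_erase hx)) ?_
      rw [herase]
      exact R.sub_mem_of_inner_pos hcr (hCΦ (hM β hβM)) hγ hβγ hγβ hγβ'
    have hadd := hC _ hrest β (hM β hβM)
    rw [herase, sub_add_cancel] at hadd
    exact hadd hγ

end RootSys

theorem RootSys.IsClosedSubset.inter {R : RootSys V} {S T : Set V}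
    (hS : R.IsClosedSubset S) (hT : R.IsClosedSubset T) :
    R.IsClosedSubset (S ∩ T) :=
  fun α hα β hβ h => ⟨hS α hα.1 β hβ.1 h, hT α hα.2 β hβ.2 h⟩

namespace PosRootSys

variable (P : PosRootSys V)

theorem disjoint_pos_neg : Disjoint P.Pos P.Neg :=
  Set.disjoint_left.mpr fun _ hpos hneg => lt_asymm hpos.2 hneg.2

theorem union_inter_pos {A B : Set V} (hA : A ⊆ P.Pos) (hB : B ⊆ P.Neg) :
    (A ∪ B) ∩ P.Pos = A := by
  rw [Set.union_inter_distrib_right, Set.inter_eq_left.mpr hA,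
    (P.disjoint_pos_neg.mono_right hB).symm.inter_eq, Set.union_empty]

theorem union_inter_neg {A B : Set V} (hA : A ⊆ P.Pos) (hB : B ⊆ P.Neg) :
    (A ∪ B) ∩ P.Neg = B := by
  rw [Set.union_inter_distrib_right, Set.inter_eq_left.mpr hB,
    (P.disjoint_pos_neg.mono_left hA).inter_eq, Set.empty_union]

theorem clos_inter_pos_subset_pos (T : Set V) : P.toRootSys.clos (T ∩ P.Pos) ⊆ P.Pos :=
  fun _ hγ => ⟨hγ.1, P.toRootSys.pos_of_mem_clos P.f (fun _ hx => hx.2.2) hγ⟩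

def dual : PosRootSys V :=
  { P with
    f := -P.f
    generic := fun α hα => neg_ne_zero.mpr (P.generic α hα) }

theorem dual_toRootSys : P.dual.toRootSys = P.toRootSys := rfl

theorem dual_pos : P.dual.Pos = P.Neg := by
  ext α
  simp [dual, Pos, Neg]

theorem dual_neg : P.dual.Neg = P.Pos := by
  ext α
  simp [dual, Pos, Neg]

theorem semiClosed_dual_iff {S : Set V} : P.dual.SemiClosed S ↔ P.SemiClosed S := by
  simp only [SemiClosed, dual_toRootSys, dual_pos, dual_neg]
  exact and_congr_right' and_comm

theorem wle_dual_iff {R S : Set V} : P.dual.wle R S ↔ P.wle S R := by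
  simp only [wle, dual_pos, dual_neg]
  exact and_comm

def semiclosedMeet (R S : Set V) : Set V :=
  P.toRootSys.clos ((R ∪ S) ∩ P.Pos) ∪ ((R ∩ S) ∩ P.Neg)

def semiclosedJoin (R S : Set V) : Set V :=
  ((R ∩ S) ∩ P.Pos) ∪ P.toRootSys.clos ((R ∪ S) ∩ P.Neg)

variable {R S T : Set V}

theorem semiclosedJoin_eq_dual_semiclosedMeet :
    P.semiclosedJoin R S = P.dual.semiclosedMeet R S := by
  rw [semiclosedJoin, semiclosedMeet, dual_toRootSys, dual_pos, dual_neg, Set.union_comm]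

theorem semiclosedMeet_inter_pos :
    P.semiclosedMeet R S ∩ P.Pos = P.toRootSys.clos ((R ∪ S) ∩ P.Pos) :=
  P.union_inter_pos (P.clos_inter_pos_subset_pos _) Set.inter_subset_right

theorem semiclosedMeet_inter_neg : P.semiclosedMeet R S ∩ P.Neg = (R ∩ S) ∩ P.Neg :=
  P.union_inter_neg (P.clos_inter_pos_subset_pos _) Set.inter_subset_right

theorem semiClosed_semiclosedMeet (hR : P.SemiClosed R) (hS : P.SemiClosed S) :
    P.SemiClosed (P.semiclosedMeet R S) := by
  refine ⟨Set.union_subset (fun _ hx => hx.1) fun _ hx => hx.2.1, ?_, ?_⟩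
  · rw [semiclosedMeet_inter_pos]
    exact P.toRootSys.isClosedSubset_clos _
  · rw [semiclosedMeet_inter_neg, Set.inter_inter_distrib_right]
    exact hR.2.2.inter hS.2.2

theorem semiclosedMeet_wle_left : P.wle (P.semiclosedMeet R S) R := by
  rw [wle, semiclosedMeet_inter_pos, semiclosedMeet_inter_neg]
  exact ⟨fun _ hx => P.toRootSys.mem_clos_of_mem ⟨Or.inl hx.1, hx.2⟩ hx.2.1,
    fun _ hx => ⟨hx.1.1, hx.2⟩⟩

theorem semiclosedMeet_wle_right : P.wle (P.semiclosedMeet R S) S := by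
  rw [wle, semiclosedMeet_inter_pos, semiclosedMeet_inter_neg]
  exact ⟨fun _ hx => P.toRootSys.mem_clos_of_mem ⟨Or.inr hx.1, hx.2⟩ hx.2.1,
    fun _ hx => ⟨hx.1.2, hx.2⟩⟩

theorem wle_semiclosedMeet (hcr : P.toRootSys.IsCrystallographic) (hT : P.SemiClosed T)
    (hTR : P.wle T R) (hTS : P.wle T S) : P.wle T (P.semiclosedMeet R S) := by
  rw [wle, semiclosedMeet_inter_pos, semiclosedMeet_inter_neg]
  refine ⟨?_, fun _ hx => ⟨⟨(hTR.2 hx).1, (hTS.2 hx).1⟩, hx.2⟩⟩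
  calc P.toRootSys.clos ((R ∪ S) ∩ P.Pos)
      ⊆ P.toRootSys.clos (T ∩ P.Pos) := by
        refine P.toRootSys.clos_mono ?_
        rw [Set.union_inter_distrib_right]
        exact Set.union_subset hTR.1 hTS.1
    _ ⊆ T ∩ P.Pos :=
        P.toRootSys.clos_subset_of_isClosedSubset hcr P.f (fun _ hx => hx.2.1) hT.2.1
          fun _ hx => hx.2.2

theorem semiClosed_semiclosedJoin (hR : P.SemiClosed R) (hS : P.SemiClosed S) :
    P.SemiClosed (P.semiclosedJoin R S) := by
  rw [semiclosedJoin_eq_dual_semiclosedMeet, ← semiClosed_dual_iff]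
  exact P.dual.semiClosed_semiclosedMeet (P.semiClosed_dual_iff.mpr hR)
    (P.semiClosed_dual_iff.mpr hS)

theorem wle_semiclosedJoin_left : P.wle R (P.semiclosedJoin R S) := by
  rw [semiclosedJoin_eq_dual_semiclosedMeet, ← wle_dual_iff]
  exact P.dual.semiclosedMeet_wle_left

theorem wle_semiclosedJoin_right : P.wle S (P.semiclosedJoin R S) := by
  rw [semiclosedJoin_eq_dual_semiclosedMeet, ← wle_dual_iff]
  exact P.dual.semiclosedMeet_wle_right

theorem semiclosedJoin_wle (hcr : P.toRootSys.IsCrystallographic) (hT : P.SemiClosed T)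
    (hRT : P.wle R T) (hST : P.wle S T) : P.wle (P.semiclosedJoin R S) T := by
  rw [semiclosedJoin_eq_dual_semiclosedMeet, ← wle_dual_iff]
  exact P.dual.wle_semiclosedMeet hcr (P.semiClosed_dual_iff.mpr hT)
    (P.wle_dual_iff.mpr hRT) (P.wle_dual_iff.mpr hST)

end PosRootSys

theorem stmt10 (P : PosRootSys V) (hcr : P.toRootSys.IsCrystallographic) :
    (∀ R S : Set V, P.SemiClosed R → P.SemiClosed S →
      P.SemiClosed (P.toRootSys.clos ((R ∪ S) ∩ P.Pos) ∪ ((R ∩ S) ∩ P.Neg)) ∧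
      P.wle (P.toRootSys.clos ((R ∪ S) ∩ P.Pos) ∪ ((R ∩ S) ∩ P.Neg)) R ∧
      P.wle (P.toRootSys.clos ((R ∪ S) ∩ P.Pos) ∪ ((R ∩ S) ∩ P.Neg)) S ∧
      (∀ T : Set V, P.SemiClosed T → P.wle T R → P.wle T S →
        P.wle T (P.toRootSys.clos ((R ∪ S) ∩ P.Pos) ∪ ((R ∩ S) ∩ P.Neg)))) ∧
    (∀ R S : Set V, P.SemiClosed R → P.SemiClosed S →
      P.SemiClosed (((R ∩ S) ∩ P.Pos) ∪ P.toRootSys.clos ((R ∪ S) ∩ P.Neg)) ∧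
      P.wle R (((R ∩ S) ∩ P.Pos) ∪ P.toRootSys.clos ((R ∪ S) ∩ P.Neg)) ∧
      P.wle S (((R ∩ S) ∩ P.Pos) ∪ P.toRootSys.clos ((R ∪ S) ∩ P.Neg)) ∧
      (∀ T : Set V, P.SemiClosed T → P.wle R T → P.wle S T →
        P.wle (((R ∩ S) ∩ P.Pos) ∪ P.toRootSys.clos ((R ∪ S) ∩ P.Neg)) T)) :=
  ⟨fun _ _ hR hS => ⟨P.semiClosed_semiclosedMeet hR hS, P.semiclosedMeet_wle_left,
      P.semiclosedMeet_wle_right, fun _ hT => P.wle_semiclosedMeet hcr hT⟩,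
    fun _ _ hR hS => ⟨P.semiClosed_semiclosedJoin hR hS, P.wle_semiclosedJoin_left,
      P.wle_semiclosedJoin_right, fun _ hT => P.semiclosedJoin_wle hcr hT⟩⟩
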